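/- arXiv:2510.12540 — 2 statements merged into one kernel-verified Lean document; each statement's English description precedes it below -/
import Mathlib

section
/- Let A and B be n×n unitary matrices and λ a unimodular complex number. For the block matrix S_λ = [[A, λB],[B, A]], the operator norm satisfies ‖S_λ‖ ≤ sqrt(2 + ‖λ·I + (B*A)²‖), where B* is the conjugate transpose of B. -/
open Matrix
open scoped Matrix.Norms.L2Operator

private lemma sqrt_sum_mulVec_le {n m : ℕ} (X : Matrix (Fin m) (Fin n) ℂ) {c : ℝ}
    (hX : ‖X‖ ≤ c) (u : Fin n → ℂ) :
    Real.sqrt (∑ i, ‖(X *ᵥ u) i‖ ^ 2) ≤ c * Real.sqrt (∑ i, ‖u i‖ ^ 2) := by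
  have h1 := X.l2_opNorm_mulVec ((WithLp.equiv 2 (Fin n → ℂ)).symm u)
  rw [EuclideanSpace.norm_eq, EuclideanSpace.norm_eq] at h1
  simp only [WithLp.equiv_symm_apply, WithLp.ofLp_toLp, EuclideanSpace.equiv] at h1
  calc Real.sqrt (∑ i, ‖(X *ᵥ u) i‖ ^ 2) ≤ ‖X‖ * Real.sqrt (∑ i, ‖u i‖ ^ 2) := h1
    _ ≤ c * Real.sqrt (∑ i, ‖u i‖ ^ 2) :=
        mul_le_mul_of_nonneg_right hX (Real.sqrt_nonneg _)

private lemma blockDiag_norm_le {n : ℕ} (X Y : Matrix (Fin n) (Fin n) ℂ) {c : ℝ} (hc : 0 ≤ c)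
    (hX : ‖X‖ ≤ c) (hY : ‖Y‖ ≤ c) : ‖fromBlocks X 0 0 Y‖ ≤ c := by
  rw [Matrix.l2_opNorm_def]
  refine ContinuousLinearMap.opNorm_le_bound _ hc fun x => ?_
  simp only [LinearEquiv.trans_apply, LinearMap.coe_toContinuousLinearMap']
  rw [Matrix.toEuclideanLin_apply]
  set v : (Fin n ⊕ Fin n) → ℂ := WithLp.equiv 2 _ x with hv
  have hveq : v = Sum.elim (v ∘ Sum.inl) (v ∘ Sum.inr) := by funext i; cases i <;> rfl
  have hmv : (fromBlocks X 0 0 Y) *ᵥ v =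
      Sum.elim (X *ᵥ (v ∘ Sum.inl)) (Y *ᵥ (v ∘ Sum.inr)) := by
    rw [hveq, fromBlocks_mulVec]; simp
  have hxn : ‖x‖ = Real.sqrt ((∑ i, ‖v (Sum.inl i)‖ ^ 2) + ∑ i, ‖v (Sum.inr i)‖ ^ 2) := by
    rw [EuclideanSpace.norm_eq, Fintype.sum_sum_type]
    rfl
  have hTxn : ‖(WithLp.equiv 2 ((Fin n ⊕ Fin n) → ℂ)).symm ((fromBlocks X 0 0 Y) *ᵥ v)‖ =
      Real.sqrt ((∑ i, ‖(X *ᵥ (v ∘ Sum.inl)) i‖ ^ 2) + ∑ i, ‖(Y *ᵥ (v ∘ Sum.inr)) i‖ ^ 2) := by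
    rw [EuclideanSpace.norm_eq, Fintype.sum_sum_type, hmv]
    simp
  rw [show WithLp.toLp 2 ((fromBlocks X 0 0 Y) *ᵥ x.ofLp) =
      (WithLp.equiv 2 ((Fin n ⊕ Fin n) → ℂ)).symm ((fromBlocks X 0 0 Y) *ᵥ v) from rfl, hTxn, hxn]
  have h1 := sqrt_sum_mulVec_le X hX (v ∘ Sum.inl)
  have h2 := sqrt_sum_mulVec_le Y hY (v ∘ Sum.inr)
  have key : ∀ a b : ℝ, 0 ≤ a → 0 ≤ b → Real.sqrt a ≤ c * Real.sqrt b → a ≤ c ^ 2 * b := by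
    intro a b ha hb h
    nlinarith [Real.sq_sqrt ha, Real.sq_sqrt hb, Real.sqrt_nonneg a, Real.sqrt_nonneg b]
  have hs1 : (∑ i, ‖(X *ᵥ (v ∘ Sum.inl)) i‖ ^ 2) ≤ c ^ 2 * ∑ i, ‖v (Sum.inl i)‖ ^ 2 :=
    key _ _ (Finset.sum_nonneg fun i _ => sq_nonneg _)
      (Finset.sum_nonneg fun i _ => sq_nonneg _) h1
  have hs2 : (∑ i, ‖(Y *ᵥ (v ∘ Sum.inr)) i‖ ^ 2) ≤ c ^ 2 * ∑ i, ‖v (Sum.inr i)‖ ^ 2 :=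
    key _ _ (Finset.sum_nonneg fun i _ => sq_nonneg _)
      (Finset.sum_nonneg fun i _ => sq_nonneg _) h2
  calc Real.sqrt ((∑ i, ‖(X *ᵥ (v ∘ Sum.inl)) i‖ ^ 2) + ∑ i, ‖(Y *ᵥ (v ∘ Sum.inr)) i‖ ^ 2)
      ≤ Real.sqrt (c ^ 2 * ((∑ i, ‖v (Sum.inl i)‖ ^ 2) + ∑ i, ‖v (Sum.inr i)‖ ^ 2)) := by
        apply Real.sqrt_le_sqrt; ring_nf; nlinarith [hs1, hs2]
    _ = c * Real.sqrt ((∑ i, ‖v (Sum.inl i)‖ ^ 2) + ∑ i, ‖v (Sum.inr i)‖ ^ 2) := by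
        rw [Real.sqrt_mul (sq_nonneg c), Real.sqrt_sq hc]

theorem stmt1 {n : ℕ} (A B : Matrix (Fin n) (Fin n) ℂ)
    (hA : A ∈ Matrix.unitaryGroup (Fin n) ℂ) (hB : B ∈ Matrix.unitaryGroup (Fin n) ℂ)
    (l : ℂ) (hl : ‖l‖ = 1) :
    ‖Matrix.fromBlocks A (l • B) B A‖ ≤
      Real.sqrt (2 + ‖l • (1 : Matrix (Fin n) (Fin n) ℂ) + (Bᴴ * A) ^ 2‖) := by
  rcases Nat.eq_zero_or_pos n with hn | hn
  · subst hn
    have hz : (Matrix.fromBlocks A (l • B) B A) = 0 := by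
      ext i j
      cases i with
      | inl a => exact a.elim0
      | inr a => exact a.elim0
    rw [hz, norm_zero]
    exact Real.sqrt_nonneg _
  haveI : Nonempty (Fin n) := ⟨⟨0, hn⟩⟩
  set U : Matrix (Fin n) (Fin n) ℂ := Bᴴ * A with hUdef
  set D : Matrix (Fin n) (Fin n) ℂ := l • (1 : Matrix (Fin n) (Fin n) ℂ) + (Bᴴ * A) ^ 2 with hDdef
  set C : Matrix (Fin n) (Fin n) ℂ := l • (Aᴴ * B) + Bᴴ * A with hCdef
  set S : Matrix (Fin n ⊕ Fin n) (Fin n ⊕ Fin n) ℂ := Matrix.fromBlocks A (l • B) B A with hSdef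
  have hAu : Aᴴ * A = 1 := by
    have := Matrix.mem_unitaryGroup_iff'.mp hA; rwa [Matrix.star_eq_conjTranspose] at this
  have hAu' : A * Aᴴ = 1 := by
    have := Matrix.mem_unitaryGroup_iff.mp hA; rwa [Matrix.star_eq_conjTranspose] at this
  have hBu : Bᴴ * B = 1 := by
    have := Matrix.mem_unitaryGroup_iff'.mp hB; rwa [Matrix.star_eq_conjTranspose] at this
  have hBu' : B * Bᴴ = 1 := by
    have := Matrix.mem_unitaryGroup_iff.mp hB; rwa [Matrix.star_eq_conjTranspose] at this
  have hl1 : star l * l = 1 := by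
    have h := Complex.mul_conj l
    rw [Complex.star_def, mul_comm, h, Complex.normSq_eq_norm_sq, hl]
    norm_num
  have hU : U ∈ Matrix.unitaryGroup (Fin n) ℂ := mul_mem (Unitary.star_mem hB) hA
  have hUu : Uᴴ * U = 1 := by
    have := Matrix.mem_unitaryGroup_iff'.mp hU; rwa [Matrix.star_eq_conjTranspose] at this
  have hUu' : U * Uᴴ = 1 := by
    have := Matrix.mem_unitaryGroup_iff.mp hU; rwa [Matrix.star_eq_conjTranspose] at this
  have hUH : Uᴴ = Aᴴ * B := by
    rw [hUdef, Matrix.conjTranspose_mul, Matrix.conjTranspose_conjTranspose]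
  -- C = Uᴴ * D
  have hCD : C = Uᴴ * D := by
    rw [hDdef, ← hUdef, mul_add, pow_two, ← mul_assoc, hUu, one_mul, mul_smul_comm, mul_one,
      hCdef, hUH]
  -- ‖Uᴴ‖ ≤ 1
  have hUnorm : ‖Uᴴ‖ ≤ 1 := by
    have h1 : ‖Uᴴᴴ * Uᴴ‖ = ‖Uᴴ‖ * ‖Uᴴ‖ := Matrix.l2_opNorm_conjTranspose_mul_self Uᴴ
    rw [Matrix.conjTranspose_conjTranspose, hUu'] at h1
    have h2 : ‖(1 : Matrix (Fin n) (Fin n) ℂ)‖ = 1 := norm_one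
    nlinarith [norm_nonneg Uᴴ]
  have hCle : ‖C‖ ≤ ‖D‖ := by
    calc ‖C‖ = ‖Uᴴ * D‖ := by rw [hCD]
      _ ≤ ‖Uᴴ‖ * ‖D‖ := norm_mul_le _ _
      _ ≤ 1 * ‖D‖ := mul_le_mul_of_nonneg_right hUnorm (norm_nonneg _)
      _ = ‖D‖ := one_mul _
  -- Sᴴ * S
  have e2 : Aᴴ * (l • B) + Bᴴ * A = C := by rw [hCdef, mul_smul_comm]
  have e3 : (l • B)ᴴ * A + Aᴴ * B = Cᴴ := by
    simp [hCdef, Matrix.conjTranspose_smul, Matrix.conjTranspose_mul, Matrix.smul_mul, add_comm]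
  have e4 : (l • B)ᴴ * (l • B) + Aᴴ * A = 1 + 1 := by
    rw [Matrix.conjTranspose_smul, Matrix.smul_mul, mul_smul_comm, smul_smul, hl1, one_smul,
      hBu, hAu]
  have hSS : Sᴴ * S = Matrix.fromBlocks (1 + 1) C Cᴴ (1 + 1) := by
    rw [hSdef, Matrix.fromBlocks_conjTranspose, Matrix.fromBlocks_multiply, e2, e3, e4, hAu, hBu]
  -- ‖T‖ ≤ ‖C‖
  set T : Matrix (Fin n ⊕ Fin n) (Fin n ⊕ Fin n) ℂ := Matrix.fromBlocks 0 C Cᴴ 0 with hTdef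
  have hTle : ‖T‖ ≤ ‖C‖ := by
    have hTT : Tᴴ * T = Matrix.fromBlocks (C * Cᴴ) 0 0 (Cᴴ * C) := by
      rw [hTdef, Matrix.fromBlocks_conjTranspose, Matrix.fromBlocks_multiply]
      simp
    have h1 : ‖C * Cᴴ‖ ≤ ‖C‖ * ‖C‖ := by
      have := Matrix.l2_opNorm_conjTranspose_mul_self Cᴴ
      rw [Matrix.conjTranspose_conjTranspose, Matrix.l2_opNorm_conjTranspose (A := C)] at this
      exact this.le
    have h2 : ‖Cᴴ * C‖ ≤ ‖C‖ * ‖C‖ := (Matrix.l2_opNorm_conjTranspose_mul_self C).le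
    have h3 : ‖Tᴴ * T‖ ≤ ‖C‖ * ‖C‖ := by
      rw [hTT]
      exact blockDiag_norm_le _ _ (mul_nonneg (norm_nonneg _) (norm_nonneg _)) h1 h2
    rw [Matrix.l2_opNorm_conjTranspose_mul_self] at h3
    nlinarith [norm_nonneg T, norm_nonneg C]
  -- decomposition
  have hdec : Sᴴ * S = (2 : ℂ) • (1 : Matrix (Fin n ⊕ Fin n) (Fin n ⊕ Fin n) ℂ) + T := by
    rw [hSS, hTdef, ← Matrix.fromBlocks_one, Matrix.fromBlocks_smul, Matrix.fromBlocks_add]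
    congr 1 <;> simp [two_smul]
  have hnormSS : ‖Sᴴ * S‖ ≤ 2 + ‖D‖ := by
    rw [hdec]
    calc ‖(2 : ℂ) • (1 : Matrix (Fin n ⊕ Fin n) (Fin n ⊕ Fin n) ℂ) + T‖
        ≤ ‖(2 : ℂ) • (1 : Matrix (Fin n ⊕ Fin n) (Fin n ⊕ Fin n) ℂ)‖ + ‖T‖ := norm_add_le _ _
      _ ≤ 2 + ‖D‖ := by
          rw [norm_smul, norm_one, mul_one]
          have h2 : ‖(2 : ℂ)‖ = (2 : ℝ) := by norm_num
          rw [h2]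
          linarith [le_trans hTle hCle]
  have hfin : ‖S‖ ^ 2 ≤ 2 + ‖D‖ := by
    rw [sq, ← Matrix.l2_opNorm_conjTranspose_mul_self]
    exact hnormSS
  calc ‖S‖ = Real.sqrt (‖S‖ ^ 2) := (Real.sqrt_sq (norm_nonneg _)).symm
    _ ≤ Real.sqrt (2 + ‖D‖) := Real.sqrt_le_sqrt hfin
end

section
/- Let N₁, N₂ be commuting normal matrices whose joint spectrum lies in P_k × P_k (P_k the regular k-gon inscribed in the unit circle), and let U₁, U₂ be contractions. If (U₁, U₂) is a compression of c·(N₁, N₂) for some c > 0, then (U₁, U₂) is also a compression of c·(M₁, M₂) for some pair of commuting normal operators M₁, M₂ of norm at most 1/cos(π/k). Consequently, in the notation of the paper, cos(π/k)·c(U, N) ≤ c(U, u₀) ≤ c(U, N). -/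
open Matrix
open scoped Matrix.Norms.L2Operator

/-- The regular `k`-gon with vertices at the `k`-th roots of unity. -/
def Pk (k : ℕ) : Set ℂ :=
  convexHull ℝ {z : ℂ | ∃ m : ℕ, m < k ∧ z = Complex.exp (2 * Real.pi * Complex.I * m / k)}

/-- The dilation constant of the pair `(U₁, U₂)` relative to pairs of commuting normal
(diagonal) matrices with joint eigenvalues in `K`: the infimum of all `c > 0` such that
`(U₁, U₂)` is a simultaneous compression of `c` times a pair of commuting diagonal matrices
whose joint eigenvalues lie in `K`. -/
noncomputable def dilConst {n : ℕ} (U₁ U₂ : Matrix (Fin n) (Fin n) ℂ)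
    (K : Set (ℂ × ℂ)) : ℝ :=
  sInf {c : ℝ | 0 < c ∧ ∃ p : ℕ, ∃ d₁ d₂ : Fin p → ℂ,
    (∀ i, (d₁ i, d₂ i) ∈ K) ∧
    ∃ V : Matrix (Fin p) (Fin n) ℂ, Vᴴ * V = 1 ∧
      U₁ = Vᴴ * (c • Matrix.diagonal d₁) * V ∧
      U₂ = Vᴴ * (c • Matrix.diagonal d₂) * V}


lemma cosk_pos {k : ℕ} (hk : 3 ≤ k) : 0 < Real.cos (Real.pi / k) := by
  have hk0 : (0:ℝ) < k := by positivity
  apply Real.cos_pos_of_mem_Ioo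
  constructor
  · have : 0 < Real.pi / k := by positivity
    linarith [Real.pi_pos]
  · have h1 : Real.pi / k ≤ Real.pi / 3 := by
      apply div_le_div_of_nonneg_left Real.pi_pos.le (by norm_num)
      exact_mod_cast hk
    have h2 : Real.pi / 3 < Real.pi / 2 := by
      apply div_lt_div_of_pos_left Real.pi_pos (by norm_num) (by norm_num)
    linarith [Real.pi_pos]

lemma Pk_subset_ball (k : ℕ) : Pk k ⊆ Metric.closedBall (0:ℂ) 1 := by
  apply convexHull_min _ (convex_closedBall _ _)
  rintro z ⟨m, hm, rfl⟩
  simp only [Metric.mem_closedBall, dist_zero_right]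
  have : (2 * Real.pi * Complex.I * m / k) = ((2 * Real.pi * m / k : ℝ) : ℂ) * Complex.I := by
    push_cast; ring
  rw [this, Complex.norm_exp_ofReal_mul_I]

lemma zero_mem_Pk {k : ℕ} (hk : 3 ≤ k) : (0:ℂ) ∈ Pk k := by
  have hk0 : k ≠ 0 := by omega
  set ζ : ℂ := Complex.exp (2 * Real.pi * Complex.I / k) with hζ
  have hprim : IsPrimitiveRoot ζ k := Complex.isPrimitiveRoot_exp k hk0
  have hne : ζ ≠ 1 := hprim.ne_one (by omega)
  have hsum : ∑ m ∈ Finset.range k, ζ ^ m = 0 := by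
    rw [geom_sum_eq hne, hprim.pow_eq_one, sub_self, zero_div]
  have hmem : ∀ m ∈ Finset.range k, ζ ^ m ∈
      {z : ℂ | ∃ m : ℕ, m < k ∧ z = Complex.exp (2 * Real.pi * Complex.I * m / k)} := by
    intro m hm
    refine ⟨m, Finset.mem_range.mp hm, ?_⟩
    rw [hζ, ← Complex.exp_nat_mul]
    congr 1
    ring
  have := Finset.centerMass_mem_convexHull (Finset.range k)
    (w := fun _ => (1:ℝ)) (by intro i _; norm_num)
    (by simp; omega) (z := fun m => ζ ^ m) hmem
  rw [Finset.centerMass] at this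
  simp only [one_smul, hsum, smul_zero] at this
  exact this

open Real in
lemma vmem {k : ℕ} (hk : 3 ≤ k) (j : ℕ) (hj : j ≤ k) :
    Complex.exp (↑((j:ℝ) * (2 * π / k)) * Complex.I) ∈ Pk k := by
  have hk0 : (0:ℝ) < k := by positivity
  have hkc : (k:ℂ) ≠ 0 := by exact_mod_cast hk0.ne'
  apply subset_convexHull ℝ _
  rcases lt_or_eq_of_le hj with h | rfl
  · refine ⟨j, h, ?_⟩
    congr 1
    push_cast
    field_simp
  · refine ⟨0, by omega, ?_⟩
    have h1 : ((j:ℝ) * (2 * π / j)) = 2 * π := by field_simp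
    rw [h1]
    have : ((2 * π : ℝ) : ℂ) * Complex.I = 2 * ↑π * Complex.I := by push_cast; ring
    rw [this, Complex.exp_two_pi_mul_I]
    simp

open Real in
lemma mem_Pk_of_abs_le {k : ℕ} (hk : 3 ≤ k) {w : ℂ}
    (hw : ‖w‖ ≤ Real.cos (π / k)) : w ∈ Pk k := by
  have hk0 : (0:ℝ) < k := by positivity
  set α : ℝ := 2 * π / k with hαdef
  have hα0 : 0 < α := by positivity
  have hαπ : α < π := by
    rw [hαdef, div_lt_iff₀ hk0]
    have h3k : (3:ℝ) ≤ k := by exact_mod_cast hk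
    nlinarith [pi_pos, mul_le_mul_of_nonneg_left h3k Real.pi_pos.le]
  have hhalf : α / 2 = π / k := by rw [hαdef]; ring
  have hcos2 : 0 < Real.cos (α / 2) := by
    apply Real.cos_pos_of_mem_Ioo
    constructor <;> [linarith [pi_pos]; linarith]
  have hsinα : 0 < Real.sin α := Real.sin_pos_of_pos_of_lt_pi hα0 hαπ
  set r : ℝ := ‖w‖ with hrdef
  have hr0 : 0 ≤ r := norm_nonneg w
  have hrc : r ≤ Real.cos (α / 2) := by rw [hhalf]; exact hw
  set θ : ℝ := Complex.arg w with hθdef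
  set t : ℝ := if θ < 0 then θ + 2 * π else θ with htdef
  have ht0 : 0 ≤ t := by
    rw [htdef]; split_ifs with h
    · linarith [Complex.neg_pi_lt_arg w, pi_pos]
    · linarith
  have ht2π : t < 2 * π := by
    rw [htdef]; split_ifs with h
    · linarith [Complex.neg_pi_lt_arg w]
    · linarith [Complex.arg_le_pi w, pi_pos]
  have hwt : w = (r : ℂ) * Complex.exp (↑t * Complex.I) := by
    rw [htdef]
    split_ifs with h
    · push_cast
      rw [add_mul, Complex.exp_add]
      have : Complex.exp (2 * ↑π * Complex.I) = 1 := Complex.exp_two_pi_mul_I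
      rw [this, mul_one, Complex.norm_mul_exp_arg_mul_I]
    · rw [Complex.norm_mul_exp_arg_mul_I]
  -- floor
  set m0 : ℤ := ⌊t / α⌋ with hm0def
  have hm00 : 0 ≤ m0 := Int.floor_nonneg.mpr (by positivity)
  set m : ℕ := m0.toNat with hmdef
  have hmcast : (m : ℝ) = (m0 : ℝ) := by
    rw [hmdef]; exact_mod_cast congrArg Int.cast (Int.toNat_of_nonneg hm00)
  have hmk : m < k := by
    have : m0 < (k : ℤ) := by
      apply Int.floor_lt.mpr
      push_cast
      rw [div_lt_iff₀ hα0, hαdef]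
      field_simp
      linarith
    omega
  set φ : ℝ := t - m * α with hφdef
  have hφ0 : 0 ≤ φ := by
    have h := Int.floor_le (t / α)
    rw [← hm0def] at h
    have h1 : (m0:ℝ) * α ≤ t := (le_div_iff₀ hα0).mp h
    rw [hφdef, hmcast]
    linarith
  have hφα : φ ≤ α := by
    have h := Int.lt_floor_add_one (t / α)
    rw [← hm0def] at h
    have h1 : t < ((m0:ℝ) + 1) * α := (div_lt_iff₀ hα0).mp h
    rw [hφdef, hmcast]
    nlinarith
  set a : ℝ := r * Real.sin (α - φ) / Real.sin α with hadef
  set b : ℝ := r * Real.sin φ / Real.sin α with hbdef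
  have ha0 : 0 ≤ a := by
    apply div_nonneg _ hsinα.le
    apply mul_nonneg hr0
    apply Real.sin_nonneg_of_nonneg_of_le_pi <;> linarith
  have hb0 : 0 ≤ b := by
    apply div_nonneg _ hsinα.le
    apply mul_nonneg hr0
    apply Real.sin_nonneg_of_nonneg_of_le_pi <;> linarith
  have hab : a + b ≤ 1 := by
    rw [hadef, hbdef, ← add_div, div_le_one hsinα]
    have e1 := Real.sin_sub α φ
    have e2 := Real.cos_sub (α/2) φ
    have e3 : Real.sin α = 2 * Real.sin (α/2) * Real.cos (α/2) := by
      rw [← Real.sin_two_mul]; ring_nf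
    have e4 : Real.cos α = 2 * Real.cos (α/2)^2 - 1 := by
      rw [← Real.cos_two_mul]; ring_nf
    have pyth := Real.sin_sq_add_cos_sq (α/2)
    have h1 : Real.sin (α - φ) + Real.sin φ
        = 2 * Real.sin (α / 2) * Real.cos (α / 2 - φ) := by
      linear_combination e1 + Real.cos φ * e3 - Real.sin φ * e4 - 2*Real.sin (α/2) * e2 - 2*Real.sin φ * pyth
    have h3 : Real.cos (α / 2 - φ) ≤ 1 := Real.cos_le_one _
    have h4 : 0 ≤ Real.sin (α / 2) :=
      Real.sin_nonneg_of_nonneg_of_le_pi (by linarith) (by linarith)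
    nlinarith [mul_nonneg hr0 h4, e3]
  -- the complex identity
  have hre : a + b * Real.cos α = r * Real.cos φ := by
    rw [hadef, hbdef, Real.sin_sub]
    field_simp
    ring
  have him : b * Real.sin α = r * Real.sin φ := by
    rw [hbdef]
    field_simp
  have hc : (a : ℂ) + (b : ℂ) * Complex.exp (↑α * Complex.I)
      = (r : ℂ) * Complex.exp (↑φ * Complex.I) := by
    apply Complex.ext <;>
      simp [Complex.exp_ofReal_mul_I_re, Complex.exp_ofReal_mul_I_im] <;> linarith
  have hEt : Complex.exp (↑t * Complex.I)
      = Complex.exp (↑((m:ℝ) * α) * Complex.I) * Complex.exp (↑φ * Complex.I) := by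
    rw [← Complex.exp_add]
    congr 1
    push_cast
    rw [hφdef]
    push_cast
    ring
  have hE2 : Complex.exp (↑(((m:ℝ) + 1) * α) * Complex.I)
      = Complex.exp (↑((m:ℝ) * α) * Complex.I) * Complex.exp (↑α * Complex.I) := by
    rw [← Complex.exp_add]
    congr 1
    push_cast
    ring
  have hw3 : w = (a : ℂ) * Complex.exp (↑((m:ℝ) * α) * Complex.I)
      + (b : ℂ) * Complex.exp (↑(((m:ℝ) + 1) * α) * Complex.I) := by
    rw [hwt, hEt, hE2]
    linear_combination Complex.exp (↑((m:ℝ) * α) * Complex.I) * hc.symm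
  -- assemble
  have hv1 : Complex.exp (↑((m:ℝ) * α) * Complex.I) ∈ Pk k := vmem hk m hmk.le
  have hv2 : Complex.exp (↑(((m:ℝ) + 1) * α) * Complex.I) ∈ Pk k := by
    have : ((m:ℝ) + 1) = ((m + 1 : ℕ) : ℝ) := by push_cast; ring
    rw [this]
    exact vmem hk (m + 1) (by omega)
  have hconv : Convex ℝ (Pk k) := convex_convexHull ℝ _
  have hsum := hconv.sum_mem (t := (Finset.univ : Finset (Fin 3)))
    (w := ![a, b, 1 - a - b])
    (z := ![Complex.exp (↑((m:ℝ) * α) * Complex.I),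
            Complex.exp (↑(((m:ℝ) + 1) * α) * Complex.I), 0])
    (by intro i _; fin_cases i <;> simp [ha0, hb0] <;> linarith)
    (by simp [Fin.sum_univ_three])
    (by
      intro i _; fin_cases i
      · simpa using hv1
      · simpa using hv2
      · simpa using zero_mem_Pk hk)
  simp only [Fin.sum_univ_three, Complex.real_smul] at hsum
  rw [hw3]
  push_cast
  simpa using hsum

lemma smul_diag {p : ℕ} (c cv : ℝ) (hcv : cv ≠ 0) (d : Fin p → ℂ) :
    (c / cv) • Matrix.diagonal (fun i => (cv:ℂ) * d i) = c • Matrix.diagonal d := by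
  ext i j
  by_cases h : i = j <;>
    simp [Matrix.diagonal_apply, h, Complex.real_smul]
  have : (cv : ℂ) ≠ 0 := by exact_mod_cast hcv
  field_simp

theorem stmt16 {n : ℕ} (k : ℕ) (hk : 3 ≤ k) (U₁ U₂ : Matrix (Fin n) (Fin n) ℂ)
    (hU₁ : ‖U₁‖ ≤ 1) (hU₂ : ‖U₂‖ ≤ 1) :
    (∀ c : ℝ, 0 < c → ∀ p : ℕ, ∀ d₁ d₂ : Fin p → ℂ,
      (∀ i, (d₁ i, d₂ i) ∈ Pk k ×ˢ Pk k) →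
      ∀ V : Matrix (Fin p) (Fin n) ℂ, Vᴴ * V = 1 →
        U₁ = Vᴴ * (c • Matrix.diagonal d₁) * V →
        U₂ = Vᴴ * (c • Matrix.diagonal d₂) * V →
      ∃ q : ℕ, ∃ e₁ e₂ : Fin q → ℂ,
        (∀ i, ‖e₁ i‖ ≤ 1 / Real.cos (Real.pi / k) ∧
              ‖e₂ i‖ ≤ 1 / Real.cos (Real.pi / k)) ∧
        ∃ W : Matrix (Fin q) (Fin n) ℂ, Wᴴ * W = 1 ∧
          U₁ = Wᴴ * (c • Matrix.diagonal e₁) * W ∧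
          U₂ = Wᴴ * (c • Matrix.diagonal e₂) * W) ∧
    Real.cos (Real.pi / k) * dilConst U₁ U₂ (Pk k ×ˢ Pk k) ≤
      dilConst U₁ U₂ (Metric.closedBall (0 : ℂ) 1 ×ˢ Metric.closedBall (0 : ℂ) 1) ∧
    dilConst U₁ U₂ (Metric.closedBall (0 : ℂ) 1 ×ˢ Metric.closedBall (0 : ℂ) 1) ≤
      dilConst U₁ U₂ (Pk k ×ˢ Pk k) := by
  have hcos : 0 < Real.cos (Real.pi / k) := cosk_pos hk
  set cv : ℝ := Real.cos (Real.pi / k) with hcv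
  have hone : (1:ℝ) ≤ 1 / cv := one_le_one_div hcos (Real.cos_le_one _)
  have habs1 : ∀ z : ℂ, z ∈ Pk k → ‖z‖ ≤ 1 := by
    intro z hz
    have := Pk_subset_ball k hz
    simpa using this
  set A : Set ℝ := {c : ℝ | 0 < c ∧ ∃ p : ℕ, ∃ d₁ d₂ : Fin p → ℂ,
    (∀ i, (d₁ i, d₂ i) ∈ Pk k ×ˢ Pk k) ∧
    ∃ V : Matrix (Fin p) (Fin n) ℂ, Vᴴ * V = 1 ∧
      U₁ = Vᴴ * (c • Matrix.diagonal d₁) * V ∧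
      U₂ = Vᴴ * (c • Matrix.diagonal d₂) * V} with hA
  set B : Set ℝ := {c : ℝ | 0 < c ∧ ∃ p : ℕ, ∃ d₁ d₂ : Fin p → ℂ,
    (∀ i, (d₁ i, d₂ i) ∈ Metric.closedBall (0:ℂ) 1 ×ˢ Metric.closedBall (0:ℂ) 1) ∧
    ∃ V : Matrix (Fin p) (Fin n) ℂ, Vᴴ * V = 1 ∧
      U₁ = Vᴴ * (c • Matrix.diagonal d₁) * V ∧
      U₂ = Vᴴ * (c • Matrix.diagonal d₂) * V} with hB
  have hdA : dilConst U₁ U₂ (Pk k ×ˢ Pk k) = sInf A := rfl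
  have hdB : dilConst U₁ U₂ (Metric.closedBall (0 : ℂ) 1 ×ˢ Metric.closedBall (0 : ℂ) 1)
      = sInf B := rfl
  have hAB : A ⊆ B := by
    rintro c ⟨hc0, p, d₁, d₂, hd, V, hV, e1, e2⟩
    refine ⟨hc0, p, d₁, d₂, fun i => ⟨Pk_subset_ball k (hd i).1, Pk_subset_ball k (hd i).2⟩,
      V, hV, e1, e2⟩
  have hBA : ∀ c ∈ B, c / cv ∈ A := by
    rintro c ⟨hc0, p, d₁, d₂, hd, V, hV, e1, e2⟩
    refine ⟨by positivity, p, fun i => (cv:ℂ) * d₁ i, fun i => (cv:ℂ) * d₂ i, ?_, V, hV, ?_, ?_⟩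
    · intro i
      constructor <;> apply mem_Pk_of_abs_le hk
      · have h1 : ‖d₁ i‖ ≤ 1 := by
          have := (hd i).1
          simpa using this
        calc ‖(cv:ℂ) * d₁ i‖ = |cv| * ‖d₁ i‖ := by
              simp [_root_.map_mul, Complex.norm_real]
          _ ≤ cv * 1 := by
              rw [abs_of_pos hcos]
              exact mul_le_mul_of_nonneg_left h1 hcos.le
          _ = cv := mul_one _
      · have h1 : ‖d₂ i‖ ≤ 1 := by
          have := (hd i).2
          simpa using this
        calc ‖(cv:ℂ) * d₂ i‖ = |cv| * ‖d₂ i‖ := by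
              simp [_root_.map_mul, Complex.norm_real]
          _ ≤ cv * 1 := by
              rw [abs_of_pos hcos]
              exact mul_le_mul_of_nonneg_left h1 hcos.le
          _ = cv := mul_one _
    · rw [smul_diag c cv hcos.ne' d₁]; exact e1
    · rw [smul_diag c cv hcos.ne' d₂]; exact e2
  have hbddB : BddBelow B := ⟨0, fun c hc => hc.1.le⟩
  have hbddA : BddBelow A := ⟨0, fun c hc => hc.1.le⟩
  refine ⟨?_, ?_, ?_⟩
  · intro c hc p d₁ d₂ hd V hV e1 e2
    refine ⟨p, d₁, d₂, ?_, V, hV, e1, e2⟩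
    intro i
    exact ⟨le_trans (habs1 _ (hd i).1) hone, le_trans (habs1 _ (hd i).2) hone⟩
  · rw [hdA, hdB]
    by_cases hBne : B.Nonempty
    · apply le_csInf hBne
      intro c hc
      have h2 : sInf A ≤ c / cv := csInf_le hbddA (hBA c hc)
      have h3 := mul_le_mul_of_nonneg_left h2 hcos.le
      rwa [mul_div_cancel₀ _ hcos.ne'] at h3
    · have hAe : ¬A.Nonempty := fun ⟨c, hc⟩ => hBne ⟨c, hAB hc⟩
      rw [Set.not_nonempty_iff_eq_empty] at hAe hBne
      simp [hAe, hBne, Real.sInf_empty]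
  · rw [hdA, hdB]
    by_cases hAne : A.Nonempty
    · exact csInf_le_csInf hbddB hAne hAB
    · have hBe : ¬B.Nonempty := fun ⟨c, hc⟩ => hAne ⟨c / cv, hBA c hc⟩
      rw [Set.not_nonempty_iff_eq_empty] at hAne hBe
      simp [hAne, hBe, Real.sInf_empty]
end
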